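/- arXiv:math/0503644 — 2 statements merged into one kernel-verified Lean document; each statement's English description precedes it below -/
import Mathlib

section
/- Let (K,d) be a metric space in which every set of finite diameter is relatively compact, and let (K_{i(e)}, w_e, p_e)_{e∈E} be a contractive Markov system with average contracting rate a ∈ (0,1) such that K_1,…,K_N are nonempty open subsets partitioning K and each restriction p_e|_{K_{i(e)}} is continuous on K_{i(e)}. Then for every x ∈ K the sequence of measures ((U*)^k δ_x)_{k∈ℕ} is tight: for every ε > 0 there exists a compact subset Q ⊆ K with ((U*)^k δ_x)(Q) ≥ 1 − ε for all k ∈ ℕ. -/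
/-!
The distance `V = d(·, x)` to the starting point is a Lyapunov function for `U`: comparing
`w_e y` with `w_e z` for a fixed reference point `z` of the cell of `y`, contractivity gives the
drift bound `U V ≤ a V + C`. Hence every `(U*)^k δ_x` has first moment at most `C / (1 - a)`, and
Markov's inequality puts all but `ε` of its mass into one closed ball around `x`, which is
compact because bounded sets are relatively compact.
-/

open MeasureTheory Filter Topology
open scoped ENNReal

/-- A contractive Markov system (CMS) on a metric space `K`, with vertex set `Fin N`
and (finite) edge set `E`. -/
structure CMS (K : Type*) [MetricSpace K] [MeasurableSpace K]
    (N : ℕ) (E : Type*) [Fintype E] where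
  ι : E → Fin N
  τ : E → Fin N
  Ks : Fin N → Set K
  Ks_nonempty : ∀ i, (Ks i).Nonempty
  Ks_meas : ∀ i, MeasurableSet (Ks i)
  Ks_disj : ∀ i j, i ≠ j → Disjoint (Ks i) (Ks j)
  Ks_cover : (⋃ i, Ks i) = Set.univ
  w : E → K → K
  w_meas : ∀ e, Measurable (w e)
  w_maps : ∀ e, Set.MapsTo (w e) (Ks (ι e)) (Ks (τ e))
  p : E → K → ℝ
  p_meas : ∀ e, Measurable (p e)
  p_nonneg : ∀ e x, 0 ≤ p e x
  p_sum_one : ∀ x, ∑ e, p e x = 1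
  p_zero : ∀ e x, x ∉ Ks (ι e) → p e x = 0
  a : ℝ
  a_pos : 0 < a
  a_lt_one : a < 1
  contractive : ∀ i, ∀ x ∈ Ks i, ∀ y ∈ Ks i,
    ∑ e, p e x * dist (w e x) (w e y) ≤ a * dist x y

namespace CMS

variable {K : Type*} [MetricSpace K] [MeasurableSpace K]
  {N : ℕ} {E : Type*} [Fintype E]

/-- The Markov operator `U` acting on functions. -/
noncomputable def Ufun (S : CMS K N E) (f : K → ℝ) : K → ℝ :=
  fun x => ∑ e, S.p e x * f (S.w e x)

/-- The adjoint Markov operator `U*` acting on measures. -/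
noncomputable def adjoint (S : CMS K N E) (ν : Measure K) : Measure K :=
  ν.bind fun x => ∑ e, ENNReal.ofReal (S.p e x) • Measure.dirac (S.w e x)

/-- The weight `p_{e₁}(x) p_{e₂}(w_{e₁} x) ⋯` of a cylinder `[e₁, …, e_k]` started at `x`. -/
noncomputable def cylWeight (S : CMS K N E) : K → List E → ℝ
  | _, [] => 1
  | x, e :: es => S.p e x * S.cylWeight (S.w e x) es

/-- `M` is the generalized Markov measure associated with the CMS and invariant measure `μ`. -/
def IsGMarkovMeasure [MeasurableSpace E] (S : CMS K N E)
    (μ : Measure K) (M : Measure (ℤ → E)) : Prop :=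
  IsProbabilityMeasure M ∧
  ∀ (m : ℤ) (es : List E),
    M {σ | ∀ j : Fin es.length, σ (m + (j : ℕ)) = es.get j} =
      ENNReal.ofReal (∫ x, S.cylWeight x es ∂μ)

/-- `comp S σ n = w_{σ 0} ∘ w_{σ (-1)} ∘ ⋯ ∘ w_{σ (-n)}`. -/
noncomputable def comp (S : CMS K N E) (σ : ℤ → E) : ℕ → K → K
  | 0, x => S.w (σ 0) x
  | n + 1, x => S.comp σ n (S.w (σ (-((n : ℤ) + 1))) x)

/-- `codeSeq S xs σ n = w_{σ 0} ∘ ⋯ ∘ w_{σ (-n)} (x_{i(σ (-n))})`. -/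
noncomputable def codeSeq (S : CMS K N E) (xs : Fin N → K) (σ : ℤ → E) (n : ℕ) : K :=
  S.comp σ n (xs (S.ι (σ (-(n : ℤ)))))

end CMS

/-- The left shift `S` on `Σ = E^ℤ`. -/
def shiftL (E : Type*) : (ℤ → E) → ℤ → E := fun σ j => σ (j + 1)

/-- The `n`-fold left shift `S^n` on `Σ = E^ℤ`, `n ∈ ℤ`. -/
def shiftZ (E : Type*) (n : ℤ) : (ℤ → E) → ℤ → E := fun σ j => σ (j + n)

namespace CMS

variable {K : Type*} [MetricSpace K] [MeasurableSpace K]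
  {N : ℕ} {E : Type*} [Fintype E]

/-- The subshift `Σ_G` of (two-sided) paths of the directed multigraph. -/
def SigmaG (S : CMS K N E) : Set (ℤ → E) :=
  {σ | ∀ j : ℤ, S.τ (σ j) = S.ι (σ (j + 1))}

/-- The set `D` of paths where the coding limit exists. -/
def Dset (S : CMS K N E) (xs : Fin N → K) : Set (ℤ → E) :=
  {σ ∈ S.SigmaG | ∃ L : K, Tendsto (S.codeSeq xs σ) atTop (nhds L)}

/-- `Y = ⋂_{n ∈ ℤ} S^n(D)`. -/
def Yset (S : CMS K N E) (xs : Fin N → K) : Set (ℤ → E) :=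
  ⋂ n : ℤ, shiftZ E n '' S.Dset xs

/-- The coding map `F`. -/
noncomputable def F [Nonempty K] (S : CMS K N E) (xs : Fin N → K) (σ : ℤ → E) : K :=
  limUnder atTop (S.codeSeq xs σ)

end CMS

/-- The modulus of uniform continuity of `f` on the set `A`. -/
noncomputable def modulusOn {K : Type*} [MetricSpace K] (f : K → ℝ) (A : Set K) (t : ℝ) : ℝ :=
  sSup {s | ∃ x ∈ A, ∃ y ∈ A, dist x y ≤ t ∧ s = |f x - f y|}

/-- Dini-continuity of `f` on `A`: `∫_0^c φ(t)/t dt < ∞` for some `c > 0`. -/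
def DiniOn {K : Type*} [MetricSpace K] (f : K → ℝ) (A : Set K) : Prop :=
  ∃ c > 0, ∫⁻ t in Set.Ioc (0 : ℝ) c, ENNReal.ofReal (modulusOn f A t / t) < ⊤

namespace CMS

variable {K : Type*} [MetricSpace K] [MeasurableSpace K]
  {N : ℕ} {E : Type*} [Fintype E] (S : CMS K N E)

theorem measurable_transition :
    Measurable fun y => ∑ e, ENNReal.ofReal (S.p e y) • Measure.dirac (S.w e y) := by
  refine Measure.measurable_of_measurable_coe _ fun s hs => ?_
  simp only [Measure.finsetSum_apply, Measure.smul_apply, smul_eq_mul, Measure.dirac_apply' _ hs]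
  exact Finset.measurable_sum _ fun e _ =>
    (ENNReal.measurable_ofReal.comp (S.p_meas e)).mul
      ((measurable_one.indicator hs).comp (S.w_meas e))

theorem lintegral_adjoint (ν : Measure K) {f : K → ℝ≥0∞} (hf : Measurable f) :
    ∫⁻ y, f y ∂S.adjoint ν = ∫⁻ y, ∑ e, ENNReal.ofReal (S.p e y) * f (S.w e y) ∂ν := by
  rw [adjoint, Measure.lintegral_bind S.measurable_transition.aemeasurable hf.aemeasurable]
  refine lintegral_congr fun y => ?_
  simp [lintegral_smul_measure, lintegral_dirac' _ hf]

theorem sum_ofReal_p (y : K) : ∑ e, ENNReal.ofReal (S.p e y) = 1 := by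
  rw [← ENNReal.ofReal_sum_of_nonneg fun e _ => S.p_nonneg e y, S.p_sum_one, ENNReal.ofReal_one]

instance isProbabilityMeasure_adjoint (ν : Measure K) [IsProbabilityMeasure ν] :
    IsProbabilityMeasure (S.adjoint ν) := by
  constructor
  simpa [S.sum_ofReal_p] using S.lintegral_adjoint ν (f := fun _ => 1) measurable_const

theorem isProbabilityMeasure_iterate_adjoint (ν : Measure K) [IsProbabilityMeasure ν] (k : ℕ) :
    IsProbabilityMeasure (S.adjoint^[k] ν) := by
  induction k with
  | zero => assumption
  | succ k ih => rw [Function.iterate_succ_apply']; infer_instance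

theorem lintegral_iterate_adjoint_le (ν : Measure K) [IsProbabilityMeasure ν]
    {V : K → ℝ≥0∞} (hV : Measurable V) {c C R : ℝ≥0∞}
    (hdrift : ∀ y, ∑ e, ENNReal.ofReal (S.p e y) * V (S.w e y) ≤ c * V y + C)
    (hfix : c * R + C ≤ R) (h₀ : ∫⁻ y, V y ∂ν ≤ R) (k : ℕ) :
    ∫⁻ y, V y ∂(S.adjoint^[k] ν) ≤ R := by
  induction k with
  | zero => exact h₀
  | succ k ih =>
    have := S.isProbabilityMeasure_iterate_adjoint ν k
    calc ∫⁻ y, V y ∂(S.adjoint^[k + 1] ν)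
        = ∫⁻ y, ∑ e, ENNReal.ofReal (S.p e y) * V (S.w e y) ∂(S.adjoint^[k] ν) := by
          rw [Function.iterate_succ_apply', S.lintegral_adjoint _ hV]
      _ ≤ ∫⁻ y, c * V y + C ∂(S.adjoint^[k] ν) := lintegral_mono hdrift
      _ = c * ∫⁻ y, V y ∂(S.adjoint^[k] ν) + C := by
          rw [lintegral_add_right _ measurable_const, lintegral_const_mul _ hV, lintegral_const,
            measure_univ, mul_one]
      _ ≤ R := le_trans (by gcongr) hfix

theorem sum_p_mul_dist_le_of_mem {i : Fin N} {y z : K} (hy : y ∈ S.Ks i) (hz : z ∈ S.Ks i)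
    (x : K) :
    ∑ e, S.p e y * dist (S.w e y) x ≤ S.a * dist y x + (S.a * dist x z + ∑ e, dist (S.w e z) x) :=
  calc ∑ e, S.p e y * dist (S.w e y) x
      ≤ ∑ e, (S.p e y * dist (S.w e y) (S.w e z) + S.p e y * dist (S.w e z) x) := by
        gcongr with e
        rw [← mul_add]
        exact mul_le_mul_of_nonneg_left (dist_triangle _ _ _) (S.p_nonneg e y)
    _ ≤ S.a * dist y z + ∑ e, dist (S.w e z) x := by
        rw [Finset.sum_add_distrib]
        gcongr with e
        · exact S.contractive i y hy z hz
        · exact mul_le_of_le_one_left dist_nonneg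
            ((Finset.single_le_sum (fun e _ => S.p_nonneg e y) (Finset.mem_univ e)).trans
              (S.p_sum_one y).le)
    _ ≤ S.a * dist y x + (S.a * dist x z + ∑ e, dist (S.w e z) x) := by
        have := mul_le_mul_of_nonneg_left (dist_triangle y x z) S.a_pos.le
        linarith

theorem exists_drift_edist (x : K) :
    ∃ C : ℝ, 0 ≤ C ∧ ∀ y, ∑ e, ENNReal.ofReal (S.p e y) * edist (S.w e y) x ≤
      ENNReal.ofReal S.a * edist y x + ENNReal.ofReal C := by
  choose z hz using S.Ks_nonempty
  set Ci : Fin N → ℝ := fun i => S.a * dist x (z i) + ∑ e, dist (S.w e (z i)) x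
  have hCi : ∀ i, 0 ≤ Ci i := fun i => by positivity [S.a_pos]
  refine ⟨∑ i, Ci i, Finset.sum_nonneg fun i _ => hCi i, fun y => ?_⟩
  obtain ⟨i, hy⟩ := Set.mem_iUnion.mp (S.Ks_cover.symm ▸ Set.mem_univ y)
  have hreal : ∑ e, S.p e y * dist (S.w e y) x ≤ S.a * dist y x + ∑ i, Ci i :=
    (S.sum_p_mul_dist_le_of_mem hy (hz i) x).trans <| by
      gcongr
      exact Finset.single_le_sum (fun i _ => hCi i) (Finset.mem_univ i)
  simp only [edist_dist, ← ENNReal.ofReal_mul (S.p_nonneg _ y),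
    ← ENNReal.ofReal_mul S.a_pos.le]
  rw [← ENNReal.ofReal_sum_of_nonneg fun e _ => mul_nonneg (S.p_nonneg e y) dist_nonneg,
    ← ENNReal.ofReal_add (by positivity [S.a_pos]) (Finset.sum_nonneg fun i _ => hCi i)]
  exact ENNReal.ofReal_le_ofReal hreal

end CMS

theorem one_sub_le_measure_closedBall_of_lintegral_edist_le {K : Type*} [MetricSpace K]
    [MeasurableSpace K] [OpensMeasurableSpace K] (μ : Measure K) [IsProbabilityMeasure μ]
    (x : K) {R ε : ℝ} (hR : 0 ≤ R) (hε : 0 < ε) (h : ∫⁻ y, edist y x ∂μ ≤ ENNReal.ofReal R) :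
    1 - ENNReal.ofReal ε ≤ μ (Metric.closedBall x (R / ε + 1)) := by
  set r := R / ε + 1
  have hr : 0 < r := by positivity
  have hr' : ENNReal.ofReal r ≠ 0 := (ENNReal.ofReal_pos.mpr hr).ne'
  rw [tsub_le_iff_tsub_le, ← prob_compl_eq_one_sub Metric.isClosed_closedBall.measurableSet]
  calc μ (Metric.closedBall x r)ᶜ
      ≤ μ {y | ENNReal.ofReal r ≤ edist y x} := by
        refine measure_mono fun y hy => ?_
        simp only [Set.mem_compl_iff, Metric.mem_closedBall, not_le] at hy
        simpa [edist_dist] using ENNReal.ofReal_le_ofReal hy.le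
    _ ≤ (∫⁻ y, edist y x ∂μ) / ENNReal.ofReal r :=
        meas_ge_le_lintegral_div (continuous_id.edist continuous_const).measurable.aemeasurable
          hr' ENNReal.ofReal_ne_top
    _ ≤ ENNReal.ofReal R / ENNReal.ofReal r := by gcongr
    _ ≤ ENNReal.ofReal ε := by
        rw [ENNReal.div_le_iff hr' ENNReal.ofReal_ne_top, ← ENNReal.ofReal_mul hε.le]
        refine ENNReal.ofReal_le_ofReal ?_
        rw [mul_add, mul_one, mul_div_cancel₀ _ hε.ne']
        linarith

theorem cms_tight_general
    {K : Type*} [MetricSpace K] [MeasurableSpace K] [BorelSpace K]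
    {N : ℕ} {E : Type*} [Fintype E] (S : CMS K N E)
    (hProper : ∀ A : Set K, Bornology.IsBounded A → IsCompact (closure A))
    (x : K) :
    ∀ ε : ℝ, 0 < ε → ∃ Q : Set K, IsCompact Q ∧
      ∀ k : ℕ, 1 - ENNReal.ofReal ε ≤ (S.adjoint)^[k] (Measure.dirac x) Q := by
  intro ε hε
  obtain ⟨C, hC, hdrift⟩ := S.exists_drift_edist x
  have h1a : 0 < 1 - S.a := sub_pos.mpr S.a_lt_one
  -- `R = C / (1 - a)` is the fixed point of `t ↦ a t + C`.
  set R := C / (1 - S.a)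
  have hR : 0 ≤ R := div_nonneg hC h1a.le
  have hfix : ENNReal.ofReal S.a * ENNReal.ofReal R + ENNReal.ofReal C ≤ ENNReal.ofReal R := by
    rw [← ENNReal.ofReal_mul S.a_pos.le, ← ENNReal.ofReal_add (by positivity [S.a_pos]) hC]
    exact ENNReal.ofReal_le_ofReal (by simp only [R]; field_simp; linarith)
  have hmoment (k : ℕ) := S.lintegral_iterate_adjoint_le (Measure.dirac x)
    (continuous_id.edist continuous_const).measurable hdrift hfix (by simp) k
  refine ⟨Metric.closedBall x (R / ε + 1), ?_, fun k => ?_⟩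
  · exact (hProper _ Metric.isBounded_closedBall).of_isClosed_subset
      Metric.isClosed_closedBall subset_closure
  · have := S.isProbabilityMeasure_iterate_adjoint (Measure.dirac x) k
    exact one_sub_le_measure_closedBall_of_lintegral_edist_le _ x hR hε (hmoment k)

theorem cms_tight
    {K : Type*} [MetricSpace K] [MeasurableSpace K] [BorelSpace K]
    {N : ℕ} {E : Type*} [Fintype E] (S : CMS K N E)
    (hProper : ∀ A : Set K, Bornology.IsBounded A → IsCompact (closure A))
    (hOpen : ∀ i, IsOpen (S.Ks i))
    (hCont : ∀ e, ContinuousOn (S.p e) (S.Ks (S.ι e)))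
    (x : K) :
    ∀ ε : ℝ, 0 < ε → ∃ Q : Set K, IsCompact Q ∧
      ∀ k : ℕ, 1 - ENNReal.ofReal ε ≤ (S.adjoint)^[k] (Measure.dirac x) Q :=
  cms_tight_general S hProper x
end

section
/- Let (K_{i(e)}, w_e, p_e)_{e∈E} be a contractive Markov system with average contracting rate a ∈ (0,1) on a metric space in which every set of finite diameter is relatively compact, with K_1,…,K_N nonempty open sets, each p_e|_{K_{i(e)}} Dini-continuous and bounded below by some δ > 0. If the system has an invariant Borel probability measure μ with μ(K_{i(e)}) > 0 for all e ∈ E, then the set Y := ⋂_{n∈ℤ} S^n(D) is dense in Σ_G. -/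
open MeasureTheory Filter Topology
open scoped ENNReal

/-!
Given `σ ∈ Σ_G` and `n`, we look for `ζ ∈ Y` agreeing with `σ` on `[-n, n]`. The coding sequence
of `S^b ζ` converges as soon as its gaps `codeGap ζ b j` are eventually `≤ √a ^ j`, and the
space of paths is compact; so it suffices to find, for every `k`, a path which follows the graph
on `[-k, k]`, extends the central word of `σ`, and satisfies `codeGap ζ b j ≤ √a ^ j` for all
`j ≥ |b| + T` whose letters lie in `[-k, k]`.

Such paths come from a first-moment argument for the cylinder masses
`∫ p_{e₁}(x) p_{e₂}(w_{e₁} x) ⋯ dμ(x)`. Invariance of `μ` makes these masses consistent under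
extension of words, the central word of `σ` has positive mass because `p ≥ δ` and
`μ(K_i) > 0`, and the expected gap is `O(a ^ j)` because an invariant measure of a contractive
system has a finite first moment. By Markov's inequality the constraint `(b, j)` is violated with
mass `O(√a ^ j)`; summing over `(b, j)` with `j ≥ |b| + T` gives less than the mass of the
central word once `T` is large, so some extension of positive mass violates no constraint.
-/

def words (E : Type*) [Fintype E] : ℕ → Finset (List E)
  | 0 => {[]}
  | k + 1 => (Finset.univ ×ˢ words E k).map
      ⟨fun q => q.1 :: q.2, by rintro ⟨_, _⟩ ⟨_, _⟩ h; simpa using h⟩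

section Words

variable {E : Type*} [Fintype E] {M : Type*} [AddCommMonoid M]

theorem mem_words {k : ℕ} {l : List E} : l ∈ words E k ↔ l.length = k := by
  induction k generalizing l with
  | zero => simp [words]
  | succ k ih =>
    simp only [words, Finset.mem_map, Finset.mem_product, Finset.mem_univ, true_and, ih,
      Prod.exists]
    constructor
    · rintro ⟨e, l, hl, rfl⟩
      exact congrArg (· + 1) hl
    · intro hl
      cases l with
      | nil => simp at hl
      | cons e l => exact ⟨e, l, by simpa using hl, rfl⟩

theorem sum_words_succ (k : ℕ) (f : List E → M) :
    ∑ l ∈ words E (k + 1), f l = ∑ e, ∑ l ∈ words E k, f (e :: l) := by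
  rw [words, Finset.sum_map, Finset.sum_product]
  rfl

theorem sum_words_add (k₁ k₂ : ℕ) (f : List E → M) :
    ∑ l ∈ words E (k₁ + k₂), f l = ∑ l₁ ∈ words E k₁, ∑ l₂ ∈ words E k₂, f (l₁ ++ l₂) := by
  induction k₁ generalizing f with
  | zero => simp [words]
  | succ k ih => simp only [Nat.succ_add, sum_words_succ, ih, List.cons_append]

end Words

section Window

variable {E : Type*}

def window (ζ : ℤ → E) (s : ℤ) (m : ℕ) : List E :=
  List.ofFn fun i : Fin m => ζ (s + i)

@[simp] theorem length_window (ζ : ℤ → E) (s : ℤ) (m : ℕ) : (window ζ s m).length = m :=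
  List.length_ofFn

theorem window_succ (ζ : ℤ → E) (s : ℤ) (m : ℕ) :
    window ζ s (m + 1) = ζ s :: window ζ (s + 1) m := by
  simp only [window, List.ofFn_succ, Fin.val_zero, Nat.cast_zero, add_zero, Fin.val_succ,
    Nat.cast_add, Nat.cast_one, add_assoc, add_comm (1 : ℤ)]

theorem window_congr {ζ ζ' : ℤ → E} {s : ℤ} {m : ℕ}
    (h : ∀ i, s ≤ i → i < s + m → ζ i = ζ' i) : window ζ s m = window ζ' s m :=
  List.ofFn_inj.2 (funext fun i => h _ (by omega) (by omega))

theorem eq_of_window_eq {ζ ζ' : ℤ → E} {s : ℤ} {m : ℕ} (h : window ζ s m = window ζ' s m)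
    {i : ℤ} (hs : s ≤ i) (hm : i < s + m) : ζ i = ζ' i := by
  have := congrFun (List.ofFn_inj.1 h) ⟨(i - s).toNat, by omega⟩
  simpa [Int.toNat_of_nonneg (sub_nonneg.2 hs)] using this

theorem window_shiftZ (ζ : ℤ → E) (b s : ℤ) (m : ℕ) :
    window (shiftZ E b ζ) s m = window ζ (s + b) m :=
  List.ofFn_inj.2 (funext fun i => congrArg ζ (by ring))

/-- The path carrying the word `W` from position `s` on (padded with `e₀`), so that
`window (pathOfWord e₀ W s) s W.length = W`. -/
def pathOfWord (e₀ : E) (W : List E) (s : ℤ) (i : ℤ) : E :=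
  W.getD (i - s).toNat e₀

theorem pathOfWord_of_lt_length (e₀ : E) (W : List E) {s i : ℤ}
    (hW : (i - s).toNat < W.length) : pathOfWord e₀ W s i = W[(i - s).toNat] :=
  List.getD_eq_getElem W e₀ hW

theorem window_pathOfWord (e₀ : E) (W : List E) {s s' : ℤ} (m : ℕ) (hs : s ≤ s')
    (hW : (s' - s).toNat + m ≤ W.length) :
    window (pathOfWord e₀ W s) s' m = (W.drop (s' - s).toNat).take m := by
  refine List.ext_getElem (by simp only [length_window, List.length_take, List.length_drop]; omega)
    fun i hi _ => ?_
  rw [length_window] at hi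
  simp only [window, List.getElem_ofFn, List.getElem_take, List.getElem_drop]
  rw [pathOfWord_of_lt_length e₀ W (by omega)]
  congr 1
  omega

theorem rel_pathOfWord_of_isChain {R : E → E → Prop} (e₀ : E) {W : List E} (hW : W.IsChain R)
    {s l : ℤ} (hl : s ≤ l) (hlen : (l - s).toNat + 1 < W.length) :
    R (pathOfWord e₀ W s l) (pathOfWord e₀ W s (l + 1)) := by
  have h : (l + 1 - s).toNat = (l - s).toNat + 1 := by omega
  rw [pathOfWord_of_lt_length e₀ W (by omega), pathOfWord_of_lt_length e₀ W (by omega)]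
  simp only [h]
  exact hW.getElem _ hlen

end Window

theorem isClosed_of_dependsOn_mem {ι : Type*} {α : ι → Type*} [∀ i, TopologicalSpace (α i)]
    [∀ i, DiscreteTopology (α i)] {A : Set (∀ i, α i)} {s : Finset ι}
    (hA : DependsOn (· ∈ A) (s : Set ι)) : IsClosed A := by
  obtain ⟨g, hg⟩ := dependsOn_iff_exists_comp.1 hA
  have : A = (s : Set ι).domRestrict ⁻¹' {y | g y} := Set.ext fun x => iff_of_eq (congrFun hg x)
  rw [this]
  exact (isClosed_discrete _).preimage (continuous_pi fun i => continuous_apply _)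

theorem mem_closure_of_forall_exists_eqOn {X : Type*} [TopologicalSpace X] {A : Set (ℤ → X)}
    {σ : ℤ → X} (h : ∀ n : ℕ, ∃ ζ ∈ A, ∀ l : ℤ, l.natAbs ≤ n → ζ l = σ l) : σ ∈ closure A := by
  choose ζ hζA hζ using h
  refine mem_closure_of_tendsto (tendsto_pi_nhds.2 fun l => tendsto_const_nhds.congr' ?_)
    (Eventually.of_forall (f := atTop) hζA)
  filter_upwards [eventually_ge_atTop l.natAbs] with n hn using (hζ n l hn).symm

theorem sum_filter_exists_le_sum_sum_filter {ι κ : Type*} (s : Finset ι) (F : Finset κ)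
    (P : κ → ι → Prop) [∀ k x, Decidable (P k x)] (f : ι → ℝ≥0∞) :
    ∑ x ∈ s with ∃ k ∈ F, P k x, f x ≤ ∑ k ∈ F, ∑ x ∈ s with P k x, f x := by
  calc ∑ x ∈ s with ∃ k ∈ F, P k x, f x
      ≤ ∑ x ∈ s with ∃ k ∈ F, P k x, ∑ k ∈ F, if P k x then f x else 0 := by
        refine Finset.sum_le_sum fun x hx => ?_
        obtain ⟨k, hk, hPk⟩ := (Finset.mem_filter.1 hx).2
        exact (if_pos hPk).symm.le.trans
          (Finset.single_le_sum (f := fun k => if P k x then f x else 0) (fun _ _ => zero_le) hk)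
    _ ≤ ∑ x ∈ s, ∑ k ∈ F, if P k x then f x else 0 :=
        Finset.sum_le_sum_of_subset (Finset.filter_subset _ s)
    _ = ∑ k ∈ F, ∑ x ∈ s with P k x, f x := by
        rw [Finset.sum_comm]
        exact Finset.sum_congr rfl fun k _ => (Finset.sum_filter _ _).symm

theorem le_div_one_sub_of_le_mul_add {X a c : ℝ≥0∞} (hX : X ≠ ⊤) (ha : a < 1)
    (h : X ≤ X * a + c) : X ≤ c / (1 - a) := by
  rw [ENNReal.le_div_iff_mul_le (Or.inl (tsub_pos_of_lt ha).ne')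
    (Or.inl (ENNReal.sub_ne_top ENNReal.one_ne_top)), ENNReal.mul_sub fun _ _ => hX, mul_one]
  exact tsub_le_iff_left.2 h

theorem tsum_geometric_ne_top {ρ : ℝ≥0∞} (hρ : ρ < 1) : ∑' n : ℕ, ρ ^ n ≠ ⊤ := by
  rw [ENNReal.tsum_geometric]
  exact ENNReal.inv_ne_top.2 (tsub_pos_of_lt hρ).ne'

theorem tsum_pow_natAbs_ne_top {ρ : ℝ≥0∞} (hρ : ρ < 1) : ∑' b : ℤ, ρ ^ b.natAbs ≠ ⊤ := by
  rw [tsum_of_nat_of_neg_add_one ENNReal.summable ENNReal.summable]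
  refine ENNReal.add_ne_top.2
    ⟨by simpa using tsum_geometric_ne_top hρ, ne_top_of_le_ne_top (tsum_geometric_ne_top hρ) ?_⟩
  refine ENNReal.tsum_le_tsum fun n => ?_
  rw [show (-((n : ℤ) + 1)).natAbs = n + 1 by omega]
  exact pow_le_pow_of_le_one zero_le hρ.le n.le_succ

theorem exists_sum_mul_pow_lt {C M : ℝ≥0∞} (hC : C ≠ ⊤) (hM : 0 < M) {r : ℝ} (hr₀ : 0 ≤ r)
    (hr : r < 1) : ∃ T : ℕ, ∀ F : Finset (ℤ × ℕ),
      ∑ bi ∈ F, C * ENNReal.ofReal (r ^ (bi.1.natAbs + T + bi.2)) < M := by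
  set ρ := ENNReal.ofReal r
  have hρ : ρ < 1 := ENNReal.ofReal_lt_one.2 hr
  set Z := (∑' b : ℤ, ρ ^ b.natAbs) * ∑' i : ℕ, ρ ^ i
  have hZ : C * Z ≠ ⊤ := ENNReal.mul_ne_top hC
    (ENNReal.mul_ne_top (tsum_pow_natAbs_ne_top hρ) (tsum_geometric_ne_top hρ))
  have hlim : Tendsto (fun T : ℕ => C * Z * ρ ^ T) atTop (𝓝 0) := by
    simpa using ENNReal.Tendsto.const_mul (ENNReal.tendsto_pow_atTop_nhds_zero_of_lt_one hρ)
      (Or.inr hZ)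
  obtain ⟨T, hT⟩ := (hlim.eventually (gt_mem_nhds hM)).exists
  refine ⟨T, fun F => lt_of_le_of_lt ?_ hT⟩
  calc ∑ bi ∈ F, C * ENNReal.ofReal (r ^ (bi.1.natAbs + T + bi.2))
      = C * ρ ^ T * ∑ bi ∈ F, ρ ^ bi.1.natAbs * ρ ^ bi.2 := by
        rw [Finset.mul_sum]
        refine Finset.sum_congr rfl fun bi _ => ?_
        rw [ENNReal.ofReal_pow hr₀, pow_add, pow_add]
        ring
    _ ≤ C * ρ ^ T * ∑' bi : ℤ × ℕ, ρ ^ bi.1.natAbs * ρ ^ bi.2 := by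
        gcongr
        exact ENNReal.sum_le_tsum F
    _ = C * Z * ρ ^ T := by
        rw [ENNReal.tsum_prod']
        simp only [ENNReal.tsum_mul_left, ENNReal.tsum_mul_right, Z]
        ring

namespace CMS

variable {K : Type*} [MetricSpace K] [MeasurableSpace K] {N : ℕ} {E : Type*} [Fintype E]

section Cylinders

variable (S : CMS K N E)

theorem exists_mem_Ks (x : K) : ∃ i, x ∈ S.Ks i := by
  simpa using S.Ks_cover.ge (Set.mem_univ x)

theorem eq_of_mem_Ks {x : K} {i j : Fin N} (hi : x ∈ S.Ks i) (hj : x ∈ S.Ks j) : i = j := by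
  by_contra hij
  exact (S.Ks_disj i j hij).ne_of_mem hi hj rfl

theorem mem_Ks_of_p_ne_zero {e : E} {x : K} (h : S.p e x ≠ 0) : x ∈ S.Ks (S.ι e) :=
  not_imp_comm.1 (S.p_zero e x) h

theorem sum_p_mul_le_sum_p_mul {x : K} {i : Fin N} (hx : x ∈ S.Ks i) {g h : E → ℝ}
    (hgh : ∀ e, S.ι e = i → g e ≤ h e) : ∑ e, S.p e x * g e ≤ ∑ e, S.p e x * h e := by
  refine Finset.sum_le_sum fun e _ => ?_
  by_cases hp : S.p e x = 0
  · simp [hp]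
  · exact mul_le_mul_of_nonneg_left
      (hgh e (S.eq_of_mem_Ks (S.mem_Ks_of_p_ne_zero hp) hx)) (S.p_nonneg e x)

theorem sqrt_a_lt_one : √S.a < 1 :=
  (Real.sqrt_lt' one_pos).2 (by simpa using S.a_lt_one)

/-- `S.applyWord [e₁, …, eₖ] = w_{eₖ} ∘ ⋯ ∘ w_{e₁}`. -/
def applyWord (l : List E) (x : K) : K :=
  l.foldl (fun y e => S.w e y) x

@[simp] theorem applyWord_nil (x : K) : S.applyWord [] x = x := rfl

@[simp] theorem applyWord_cons (e : E) (l : List E) (x : K) :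
    S.applyWord (e :: l) x = S.applyWord l (S.w e x) := rfl

theorem applyWord_append (l₁ l₂ : List E) (x : K) :
    S.applyWord (l₁ ++ l₂) x = S.applyWord l₂ (S.applyWord l₁ x) :=
  List.foldl_append

@[simp] theorem cylWeight_nil (x : K) : S.cylWeight x [] = 1 := rfl

@[simp] theorem cylWeight_cons (e : E) (l : List E) (x : K) :
    S.cylWeight x (e :: l) = S.p e x * S.cylWeight (S.w e x) l := rfl

theorem cylWeight_nonneg (x : K) (l : List E) : 0 ≤ S.cylWeight x l := by
  induction l generalizing x with
  | nil => exact zero_le_one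
  | cons e l ih => exact mul_nonneg (S.p_nonneg e x) (ih _)

theorem cylWeight_append (x : K) (l₁ l₂ : List E) :
    S.cylWeight x (l₁ ++ l₂) = S.cylWeight x l₁ * S.cylWeight (S.applyWord l₁ x) l₂ := by
  induction l₁ generalizing x with
  | nil => simp
  | cons e l ih => simp [ih, mul_assoc]

theorem measurable_cylWeight (l : List E) : Measurable fun x => S.cylWeight x l := by
  induction l with
  | nil => exact measurable_const
  | cons e l ih => exact (S.p_meas e).mul (ih.comp (S.w_meas e))

theorem isChain_of_cylWeight_ne_zero {x : K} {l : List E} (h : S.cylWeight x l ≠ 0) :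
    l.IsChain fun e e' => S.τ e = S.ι e' := by
  induction l generalizing x with
  | nil => exact List.isChain_nil
  | cons e l ih =>
    rw [cylWeight_cons, mul_ne_zero_iff] at h
    cases l with
    | nil => exact List.isChain_singleton e
    | cons e' l =>
      rw [cylWeight_cons, mul_ne_zero_iff] at h
      refine List.isChain_cons_cons.2 ⟨?_, ih (by simpa using h.2)⟩
      exact S.eq_of_mem_Ks (S.w_maps e (S.mem_Ks_of_p_ne_zero h.1))
        (S.mem_Ks_of_p_ne_zero h.2.1)

theorem sum_cylWeight_mul_dist_le (k : ℕ) {i : Fin N} {z u : K} (hz : z ∈ S.Ks i)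
    (hu : u ∈ S.Ks i) :
    ∑ l ∈ words E k, S.cylWeight z l * dist (S.applyWord l z) (S.applyWord l u) ≤
      S.a ^ k * dist z u := by
  induction k generalizing i z u with
  | zero => simp [words]
  | succ k ih =>
    have hstep : ∀ e, S.ι e = i → ∑ l ∈ words E k, S.cylWeight (S.w e z) l *
        dist (S.applyWord l (S.w e z)) (S.applyWord l (S.w e u)) ≤
          S.a ^ k * dist (S.w e z) (S.w e u) := by
      rintro e rfl
      exact ih (S.w_maps e hz) (S.w_maps e hu)
    calc ∑ l ∈ words E (k + 1), S.cylWeight z l * dist (S.applyWord l z) (S.applyWord l u)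
        = ∑ e, S.p e z * ∑ l ∈ words E k, S.cylWeight (S.w e z) l *
            dist (S.applyWord l (S.w e z)) (S.applyWord l (S.w e u)) := by
          simp only [sum_words_succ, cylWeight_cons, applyWord_cons, mul_assoc, Finset.mul_sum]
      _ ≤ ∑ e, S.p e z * (S.a ^ k * dist (S.w e z) (S.w e u)) :=
          S.sum_p_mul_le_sum_p_mul hz hstep
      _ = S.a ^ k * ∑ e, S.p e z * dist (S.w e z) (S.w e u) := by
          rw [Finset.mul_sum]
          exact Finset.sum_congr rfl fun e _ => by ring
      _ ≤ S.a ^ k * (S.a * dist z u) := by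
          gcongr
          · exact pow_nonneg S.a_pos.le k
          · exact S.contractive i z hz u hu
      _ = S.a ^ (k + 1) * dist z u := by ring

theorem sum_cylWeight_mul_dist_le_add (k : ℕ) {i : Fin N} {z u v : K} (hz : z ∈ S.Ks i)
    (hu : u ∈ S.Ks i) (hv : v ∈ S.Ks i) :
    ∑ l ∈ words E k, S.cylWeight z l * dist (S.applyWord l u) (S.applyWord l v) ≤
      S.a ^ k * (dist z u + dist z v) := by
  calc ∑ l ∈ words E k, S.cylWeight z l * dist (S.applyWord l u) (S.applyWord l v)
      ≤ ∑ l ∈ words E k, (S.cylWeight z l * dist (S.applyWord l z) (S.applyWord l u) +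
          S.cylWeight z l * dist (S.applyWord l z) (S.applyWord l v)) :=
        Finset.sum_le_sum fun l _ => by
          rw [← mul_add]
          exact mul_le_mul_of_nonneg_left (dist_triangle_left _ _ _) (S.cylWeight_nonneg z l)
    _ ≤ S.a ^ k * dist z u + S.a ^ k * dist z v := by
        rw [Finset.sum_add_distrib]
        exact add_le_add (S.sum_cylWeight_mul_dist_le k hz hu)
          (S.sum_cylWeight_mul_dist_le k hz hv)
    _ = S.a ^ k * (dist z u + dist z v) := by ring

end Cylinders

section Transfer

variable (S : CMS K N E)

/-- The Markov operator `U` acting on `ℝ≥0∞`-valued functions. -/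
noncomputable def transfer (F : K → ℝ≥0∞) (x : K) : ℝ≥0∞ :=
  ∑ e, ENNReal.ofReal (S.p e x) * F (S.w e x)

theorem transfer_const (c : ℝ≥0∞) : S.transfer (fun _ => c) = fun _ => c := by
  ext x
  rw [transfer, ← Finset.sum_mul, ← ENNReal.ofReal_sum_of_nonneg fun e _ => S.p_nonneg e x,
    S.p_sum_one, ENNReal.ofReal_one, one_mul]

theorem transfer_mono {F G : K → ℝ≥0∞} (h : F ≤ G) : S.transfer F ≤ S.transfer G :=
  fun _ => Finset.sum_le_sum fun _ _ => mul_le_mul_right (h _) _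

theorem transfer_ofReal {f : K → ℝ} (hf : ∀ x, 0 ≤ f x) (x : K) :
    S.transfer (fun y => ENNReal.ofReal (f y)) x = ENNReal.ofReal (S.Ufun f x) := by
  rw [Ufun, ENNReal.ofReal_sum_of_nonneg fun e _ => mul_nonneg (S.p_nonneg e x) (hf _)]
  exact Finset.sum_congr rfl fun e _ => (ENNReal.ofReal_mul (S.p_nonneg e x)).symm

theorem measurable_transfer {F : K → ℝ≥0∞} (hF : Measurable F) : Measurable (S.transfer F) :=
  Finset.measurable_sum _ fun e _ => (S.p_meas e).ennreal_ofReal.mul (hF.comp (S.w_meas e))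

theorem transfer_iterate_apply (k : ℕ) (F : K → ℝ≥0∞) (x : K) :
    S.transfer^[k] F x =
      ∑ l ∈ words E k, ENNReal.ofReal (S.cylWeight x l) * F (S.applyWord l x) := by
  induction k generalizing x with
  | zero => simp [words]
  | succ k ih =>
    rw [Function.iterate_succ_apply', transfer, sum_words_succ]
    refine Finset.sum_congr rfl fun e _ => ?_
    rw [ih, Finset.mul_sum]
    refine Finset.sum_congr rfl fun l _ => ?_
    rw [cylWeight_cons, applyWord_cons, ENNReal.ofReal_mul (S.p_nonneg e x), mul_assoc]

theorem sum_words_ofReal_cylWeight (k : ℕ) (x : K) :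
    ∑ l ∈ words E k, ENNReal.ofReal (S.cylWeight x l) = 1 := by
  simpa [Function.iterate_fixed (S.transfer_const 1)] using
    (S.transfer_iterate_apply k (fun _ => 1) x).symm

theorem measurable_transitionMeasure :
    Measurable fun x => ∑ e, ENNReal.ofReal (S.p e x) • Measure.dirac (S.w e x) := by
  refine Measure.measurable_of_measurable_coe _ fun s hs => ?_
  simp only [Measure.coe_finsetSum, Finset.sum_apply, Measure.smul_apply, smul_eq_mul,
    Measure.dirac_apply' _ hs]
  exact Finset.measurable_sum _ fun e _ => (S.p_meas e).ennreal_ofReal.mul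
    ((measurable_one.indicator hs).comp (S.w_meas e))

variable {S} {μ : Measure K}

theorem lintegral_transfer (hinv : S.adjoint μ = μ) {F : K → ℝ≥0∞} (hF : Measurable F) :
    ∫⁻ x, S.transfer F x ∂μ = ∫⁻ x, F x ∂μ := by
  conv_rhs => rw [← hinv]
  rw [adjoint, Measure.lintegral_bind S.measurable_transitionMeasure.aemeasurable
    hF.aemeasurable]
  refine lintegral_congr fun x => ?_
  simp only [lintegral_finsetSum_measure, lintegral_smul_measure, lintegral_dirac' _ hF,
    smul_eq_mul, transfer]

theorem lintegral_transfer_iterate (hinv : S.adjoint μ = μ) {F : K → ℝ≥0∞} (hF : Measurable F)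
    (k : ℕ) : ∫⁻ x, S.transfer^[k] F x ∂μ = ∫⁻ x, F x ∂μ := by
  induction k with
  | zero => rfl
  | succ k ih =>
    rw [Function.iterate_succ_apply', lintegral_transfer hinv
      (Function.Iterate.rec (fun G => Measurable G) hF (fun _ => S.measurable_transfer) k), ih]

/-- Solving the drift inequality `U f ≤ a f + c` requires finite integrals; it is applied to
the part of `f` below `n`, which is accounted for exactly by `min f n`. -/
theorem setLIntegral_le_of_transfer_le [IsFiniteMeasure μ] (hinv : S.adjoint μ = μ)
    {f : K → ℝ≥0∞} (hf : Measurable f) {c : ℝ≥0∞}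
    (hdrift : ∀ x, S.transfer f x ≤ ENNReal.ofReal S.a * f x + c) (n : ℕ) :
    ∫⁻ x in {x | f x ≤ n}, f x ∂μ ≤
      (∫⁻ x in {x | f x ≤ n}, f x ∂μ) * ENNReal.ofReal S.a + c * μ Set.univ := by
  set a := ENNReal.ofReal S.a
  set A := {x | f x ≤ n}
  have hA : MeasurableSet A := hf measurableSet_Iic
  have hmin (x : K) : min (f x) n = A.indicator f x + Aᶜ.indicator (fun _ => (n : ℝ≥0∞)) x := by
    by_cases hx : x ∈ A
    · simp [hx, min_eq_left (show f x ≤ n from hx)]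
    · simp [hx, min_eq_right (not_le.1 (show ¬ f x ≤ n from hx)).le]
  have htransfer (x : K) : S.transfer (fun x => min (f x) n) x ≤
      A.indicator (fun x => a * f x + c) x + Aᶜ.indicator (fun _ => (n : ℝ≥0∞)) x := by
    by_cases hx : x ∈ A
    · simp only [Set.indicator_of_mem hx, Set.indicator_of_notMem (Set.notMem_compl_iff.2 hx),
        add_zero]
      exact (S.transfer_mono (fun y => min_le_left _ _) x).trans (hdrift x)
    · simp only [Set.indicator_of_notMem hx, Set.indicator_of_mem (Set.mem_compl hx), zero_add]
      exact (S.transfer_mono (fun y => min_le_right _ _) x).trans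
        (congrFun (S.transfer_const _) x).le
  refine (ENNReal.add_le_add_iff_right (ENNReal.mul_ne_top (ENNReal.natCast_ne_top n)
    (measure_ne_top μ Aᶜ))).1 ?_
  calc ∫⁻ x in A, f x ∂μ + n * μ Aᶜ = ∫⁻ x, min (f x) n ∂μ := by
        rw [lintegral_congr hmin, lintegral_add_left (hf.indicator hA), lintegral_indicator hA,
          lintegral_indicator hA.compl, setLIntegral_const]
    _ = ∫⁻ x, S.transfer (fun x => min (f x) n) x ∂μ :=
        (lintegral_transfer hinv (hf.min measurable_const)).symm
    _ ≤ ∫⁻ x, A.indicator (fun x => a * f x + c) x + Aᶜ.indicator (fun _ => (n : ℝ≥0∞)) x ∂μ :=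
        lintegral_mono htransfer
    _ = (∫⁻ x in A, f x ∂μ) * a + c * μ A + n * μ Aᶜ := by
        rw [lintegral_add_left (((hf.const_mul a).add_const c).indicator hA),
          lintegral_indicator hA, lintegral_indicator hA.compl,
          lintegral_add_right _ measurable_const, lintegral_const_mul _ hf,
          setLIntegral_const, setLIntegral_const, mul_comm a]
    _ ≤ (∫⁻ x in A, f x ∂μ) * a + c * μ Set.univ + n * μ Aᶜ := by
        gcongr
        exact Set.subset_univ A

theorem lintegral_le_of_transfer_le [IsFiniteMeasure μ] (hinv : S.adjoint μ = μ)
    {f : K → ℝ≥0∞} (hf : Measurable f) (hfin : ∀ x, f x ≠ ⊤) {c : ℝ≥0∞}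
    (hdrift : ∀ x, S.transfer f x ≤ ENNReal.ofReal S.a * f x + c) :
    ∫⁻ x, f x ∂μ ≤ c * μ Set.univ / (1 - ENNReal.ofReal S.a) := by
  have hlevel (n : ℕ) : ∫⁻ x in {x | f x ≤ n}, f x ∂μ ≠ ⊤ := by
    refine ne_top_of_le_ne_top (ENNReal.mul_ne_top (ENNReal.natCast_ne_top n)
      (measure_ne_top μ {x | f x ≤ n})) ?_
    rw [← setLIntegral_const]
    exact setLIntegral_mono measurable_const fun x hx => hx
  have hunion : ⋃ n : ℕ, {x | f x ≤ n} = Set.univ :=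
    Set.eq_univ_of_forall fun x =>
      Set.mem_iUnion.2 ((ENNReal.exists_nat_gt (hfin x)).imp fun _ hn => hn.le)
  have hmono : Monotone fun n : ℕ => {x | f x ≤ n} :=
    fun m n hmn x (hx : f x ≤ m) => hx.trans (Nat.cast_le.2 hmn)
  calc ∫⁻ x, f x ∂μ = ∫⁻ x in ⋃ n : ℕ, {x | f x ≤ n}, f x ∂μ := by
        rw [hunion, Measure.restrict_univ]
    _ = ⨆ n : ℕ, ∫⁻ x in {x | f x ≤ n}, f x ∂μ :=
        setLIntegral_iUnion_of_directed _ hmono.directed_le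
    _ ≤ c * μ Set.univ / (1 - ENNReal.ofReal S.a) :=
        iSup_le fun n => le_div_one_sub_of_le_mul_add (hlevel n)
          (ENNReal.ofReal_lt_one.2 S.a_lt_one) (setLIntegral_le_of_transfer_le hinv hf hdrift n)

end Transfer

section WordMass

variable (S : CMS K N E) (μ : Measure K)

noncomputable def wordMass (l : List E) : ℝ≥0∞ :=
  ∫⁻ x, ENNReal.ofReal (S.cylWeight x l) ∂μ

variable {S μ}

theorem sum_wordMass_append_append (hinv : S.adjoint μ = μ) (d k : ℕ) (m : List E) :
    ∑ l₁ ∈ words E d, ∑ l₂ ∈ words E k, S.wordMass μ (l₁ ++ m ++ l₂) = S.wordMass μ m := by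
  have hpoint (x : K) : ∑ l₁ ∈ words E d, ∑ l₂ ∈ words E k,
      ENNReal.ofReal (S.cylWeight x (l₁ ++ m ++ l₂)) =
        S.transfer^[d] (fun y => ENNReal.ofReal (S.cylWeight y m)) x := by
    rw [transfer_iterate_apply]
    refine Finset.sum_congr rfl fun l₁ _ => ?_
    simp only [cylWeight_append, applyWord_append, ENNReal.ofReal_mul (S.cylWeight_nonneg _ _),
      ENNReal.ofReal_mul (mul_nonneg (S.cylWeight_nonneg _ _) (S.cylWeight_nonneg _ _)),
      ← Finset.mul_sum, sum_words_ofReal_cylWeight, mul_one]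
  simp only [wordMass]
  rw [← lintegral_transfer_iterate hinv (S.measurable_cylWeight m).ennreal_ofReal d,
    ← lintegral_congr hpoint, lintegral_finsetSum _ fun l₁ _ =>
      Finset.measurable_sum _ fun l₂ _ => (S.measurable_cylWeight _).ennreal_ofReal]
  exact Finset.sum_congr rfl fun l₁ _ =>
    (lintegral_finsetSum _ fun l₂ _ => (S.measurable_cylWeight _).ennreal_ofReal).symm

theorem sum_wordMass_mul_drop_take (hinv : S.adjoint μ = μ) (f : List E → ℝ≥0∞) (d m k : ℕ) :
    ∑ l ∈ words E (d + m + k), S.wordMass μ l * f ((l.drop d).take m) =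
      ∑ u ∈ words E m, S.wordMass μ u * f u := by
  have hsplit : ∀ l₁ ∈ words E d, ∀ u ∈ words E m, ∀ l₂ : List E,
      ((l₁ ++ u ++ l₂).drop d).take m = u := by
    intro l₁ hl₁ u hu l₂
    rw [mem_words] at hl₁ hu
    rw [List.append_assoc, ← hl₁, List.drop_left, ← hu, List.take_left]
  rw [sum_words_add, sum_words_add, Finset.sum_comm]
  refine Finset.sum_congr rfl fun u hu => ?_
  rw [← sum_wordMass_append_append hinv d k u, Finset.sum_mul]
  refine Finset.sum_congr rfl fun l₁ hl₁ => ?_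
  rw [Finset.sum_mul]
  exact Finset.sum_congr rfl fun l₂ _ => by rw [hsplit l₁ hl₁ u hu]

theorem sum_wordMass_filter_window_eq [DecidableEq E] (hinv : S.adjoint μ = μ) (e₀ : E)
    {n k : ℕ} (hnk : n ≤ k) {u : List E} (hu : u.length = 2 * n + 1) :
    ∑ W ∈ words E (2 * k + 1) with window (pathOfWord e₀ W (-k)) (-n) (2 * n + 1) = u,
      S.wordMass μ W = S.wordMass μ u := by
  have hlen : 2 * k + 1 = (k - n) + (2 * n + 1) + (k - n) := by omega
  have hmid : ∀ W ∈ words E (2 * k + 1), window (pathOfWord e₀ W (-k)) (-n) (2 * n + 1) =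
      (W.drop (k - n)).take (2 * n + 1) := fun W hW => by
    rw [window_pathOfWord _ _ _ (by omega) (by rw [mem_words.1 hW]; omega)]
    congr 2
    omega
  rw [Finset.sum_filter]
  calc ∑ W ∈ words E (2 * k + 1),
        (if window (pathOfWord e₀ W (-k)) (-n) (2 * n + 1) = u then S.wordMass μ W else 0)
      = ∑ W ∈ words E (2 * k + 1),
          S.wordMass μ W * (if (W.drop (k - n)).take (2 * n + 1) = u then 1 else 0) :=
        Finset.sum_congr rfl fun W hW => by rw [hmid W hW, mul_ite, mul_one, mul_zero]
    _ = S.wordMass μ u := by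
        rw [hlen, sum_wordMass_mul_drop_take hinv (fun m => if m = u then 1 else 0)]
        simp [mem_words.2 hu]

theorem isChain_of_wordMass_ne_zero {W : List E} (h : S.wordMass μ W ≠ 0) :
    W.IsChain fun e e' => S.τ e = S.ι e' := by
  by_contra hW
  have hzero (x : K) : S.cylWeight x W = 0 :=
    not_not.1 fun hx => hW (S.isChain_of_cylWeight_ne_zero hx)
  exact h (by simp [wordMass, hzero])

end WordMass

section Moment

variable (S : CMS K N E) (xs : Fin N → K)

/-- The distance from `x` to the base point of the cell containing `x`. -/
noncomputable def anchorDist (x : K) : ℝ :=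
  ∑ i, (S.Ks i).indicator (fun y => dist y (xs i)) x

noncomputable def anchorOffset : ℝ :=
  ∑ e, dist (S.w e (xs (S.ι e))) (xs (S.τ e))

variable {S xs} {μ : Measure K}

theorem anchorDist_eq {x : K} {i : Fin N} (hx : x ∈ S.Ks i) :
    S.anchorDist xs x = dist x (xs i) := by
  rw [anchorDist, Finset.sum_eq_single i (fun j _ hji => Set.indicator_of_notMem
      (fun hxj => hji (S.eq_of_mem_Ks hxj hx)) _) (by simp), Set.indicator_of_mem hx]

theorem anchorDist_nonneg (x : K) : 0 ≤ S.anchorDist xs x :=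
  Finset.sum_nonneg fun _ _ => Set.indicator_nonneg (fun _ _ => dist_nonneg) x

theorem measurable_anchorDist [BorelSpace K] : Measurable (S.anchorDist xs) :=
  Finset.measurable_sum _ fun i _ =>
    (continuous_id.dist continuous_const).measurable.indicator (S.Ks_meas i)

theorem dist_le_anchorOffset (e : E) :
    dist (S.w e (xs (S.ι e))) (xs (S.τ e)) ≤ S.anchorOffset xs :=
  Finset.single_le_sum (f := fun e => dist (S.w e (xs (S.ι e))) (xs (S.τ e)))
    (fun _ _ => dist_nonneg) (Finset.mem_univ e)

theorem Ufun_anchorDist_le (hxs : ∀ i, xs i ∈ S.Ks i) (x : K) :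
    S.Ufun (S.anchorDist xs) x ≤ S.a * S.anchorDist xs x + S.anchorOffset xs := by
  obtain ⟨i, hx⟩ := S.exists_mem_Ks x
  have hstep : ∀ e, S.ι e = i → S.anchorDist xs (S.w e x) ≤
      dist (S.w e x) (S.w e (xs i)) + S.anchorOffset xs := by
    rintro e rfl
    rw [anchorDist_eq (S.w_maps e hx)]
    exact (dist_triangle _ (S.w e (xs (S.ι e))) _).trans
      (add_le_add_right (dist_le_anchorOffset e) _)
  calc S.Ufun (S.anchorDist xs) x
      ≤ ∑ e, S.p e x * (dist (S.w e x) (S.w e (xs i)) + S.anchorOffset xs) :=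
        S.sum_p_mul_le_sum_p_mul hx hstep
    _ = ∑ e, S.p e x * dist (S.w e x) (S.w e (xs i)) + S.anchorOffset xs := by
        simp only [mul_add, Finset.sum_add_distrib, ← Finset.sum_mul, S.p_sum_one, one_mul]
    _ ≤ S.a * S.anchorDist xs x + S.anchorOffset xs := by
        rw [anchorDist_eq hx]
        exact add_le_add_left (S.contractive i x hx (xs i) (hxs i)) _

theorem integrable_anchorDist [BorelSpace K] [IsFiniteMeasure μ] (hinv : S.adjoint μ = μ)
    (hxs : ∀ i, xs i ∈ S.Ks i) : Integrable (S.anchorDist xs) μ := by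
  refine ⟨measurable_anchorDist.aestronglyMeasurable,
    (hasFiniteIntegral_iff_ofReal (ae_of_all _ anchorDist_nonneg)).2 ?_⟩
  refine (lintegral_le_of_transfer_le hinv measurable_anchorDist.ennreal_ofReal
    (fun _ => ENNReal.ofReal_ne_top) (c := ENNReal.ofReal (S.anchorOffset xs))
    fun x => ?_).trans_lt (ENNReal.div_lt_top (ENNReal.mul_ne_top ENNReal.ofReal_ne_top
      (measure_ne_top μ _)) (tsub_pos_of_lt (ENNReal.ofReal_lt_one.2 S.a_lt_one)).ne')
  rw [S.transfer_ofReal anchorDist_nonneg, ← ENNReal.ofReal_mul S.a_pos.le]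
  exact (ENNReal.ofReal_le_ofReal (Ufun_anchorDist_le hxs x)).trans ENNReal.ofReal_add_le

end Moment

section Coding

variable (S : CMS K N E) (xs : Fin N → K)

noncomputable def codeIncrement : List E → ℝ
  | e :: e' :: l => dist (S.applyWord (e :: e' :: l) (xs (S.ι e)))
      (S.applyWord (e' :: l) (xs (S.ι e')))
  | _ => 0

theorem comp_eq_applyWord (σ : ℤ → E) (n : ℕ) (x : K) :
    S.comp σ n x = S.applyWord (window σ (-n) (n + 1)) x := by
  induction n generalizing x with
  | zero => simp [comp, window]
  | succ n ih =>
    have h : -((n + 1 : ℕ) : ℤ) + 1 = -n := by push_cast; ring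
    rw [comp, ih, window_succ σ (-((n + 1 : ℕ) : ℤ)), h, applyWord_cons]
    push_cast
    rfl

noncomputable def codeGap (ζ : ℤ → E) (b : ℤ) (j : ℕ) : ℝ :=
  dist (S.codeSeq xs (shiftZ E b ζ) j) (S.codeSeq xs (shiftZ E b ζ) (j + 1))

theorem codeGap_eq (ζ : ℤ → E) (b : ℤ) (j : ℕ) :
    S.codeGap xs ζ b j = S.codeIncrement xs (window ζ (b - j - 1) (j + 2)) := by
  have hcode (i : ℕ) : S.codeSeq xs (shiftZ E b ζ) i =
      S.applyWord (window ζ (b - i) (i + 1)) (xs (S.ι (ζ (b - i)))) := by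
    rw [codeSeq, comp_eq_applyWord, window_shiftZ, shiftZ, neg_add_eq_sub]
  have hj : b - ((j + 1 : ℕ) : ℤ) = b - j - 1 := by push_cast; ring
  have hw : window ζ (b - j - 1) (j + 2) = ζ (b - j - 1) :: window ζ (b - j) (j + 1) := by
    rw [window_succ, sub_add_cancel]
  rw [codeGap, hcode, hcode, hj, dist_comm, hw, window_succ ζ (b - j) j, codeIncrement,
    ← window_succ, ← hw]

variable {S xs} {μ : Measure K}

theorem codeIncrement_nonneg (l : List E) : 0 ≤ S.codeIncrement xs l := by
  match l with
  | e :: e' :: l => exact dist_nonneg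
  | [] | [_] => exact le_rfl

theorem sum_cylWeight_mul_codeIncrement_cons_le (hxs : ∀ i, xs i ∈ S.Ks i) (e : E) {z : K}
    (hz : z ∈ S.Ks (S.τ e)) (j : ℕ) :
    ∑ l ∈ words E (j + 1), S.cylWeight z l * S.codeIncrement xs (e :: l) ≤
      S.a ^ (j + 1) * (dist z (S.w e (xs (S.ι e))) + dist z (xs (S.τ e))) := by
  -- Only words starting with an edge out of `τ e` carry weight, and for these the shorter code
  -- is started at `xs (τ e)`.
  have hcongr : ∀ l ∈ words E (j + 1), S.cylWeight z l * S.codeIncrement xs (e :: l) =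
      S.cylWeight z l * dist (S.applyWord l (S.w e (xs (S.ι e)))) (S.applyWord l (xs (S.τ e))) := by
    intro l hl
    obtain ⟨e', t, rfl⟩ := List.exists_cons_of_length_eq_add_one (mem_words.1 hl)
    by_cases hp : S.p e' z = 0
    · simp [hp]
    · rw [codeIncrement, applyWord_cons, S.eq_of_mem_Ks (S.mem_Ks_of_p_ne_zero hp) hz]
  rw [Finset.sum_congr rfl hcongr]
  exact S.sum_cylWeight_mul_dist_le_add (j + 1) hz (S.w_maps e (hxs _)) (hxs _)

theorem sum_cylWeight_mul_codeIncrement_le (hxs : ∀ i, xs i ∈ S.Ks i) (j : ℕ) (y : K) :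
    ∑ m ∈ words E (j + 2), S.cylWeight y m * S.codeIncrement xs m ≤
      S.a ^ (j + 1) * (2 * S.a * S.anchorDist xs y + S.anchorOffset xs) := by
  obtain ⟨i, hy⟩ := S.exists_mem_Ks y
  have hstep : ∀ e, S.ι e = i →
      ∑ l ∈ words E (j + 1), S.cylWeight (S.w e y) l * S.codeIncrement xs (e :: l) ≤
        S.a ^ (j + 1) * (2 * dist (S.w e y) (S.w e (xs i)) + S.anchorOffset xs) := by
    rintro e rfl
    refine (sum_cylWeight_mul_codeIncrement_cons_le hxs e (S.w_maps e hy) j).trans ?_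
    have := (dist_triangle (S.w e y) (S.w e (xs (S.ι e))) (xs (S.τ e))).trans
      (add_le_add_right (dist_le_anchorOffset (xs := xs) e) _)
    exact mul_le_mul_of_nonneg_left (by linarith) (pow_nonneg S.a_pos.le _)
  calc ∑ m ∈ words E (j + 2), S.cylWeight y m * S.codeIncrement xs m
      = ∑ e, S.p e y * ∑ l ∈ words E (j + 1),
          S.cylWeight (S.w e y) l * S.codeIncrement xs (e :: l) := by
        simp only [sum_words_succ (j + 1), cylWeight_cons, mul_assoc, Finset.mul_sum]
    _ ≤ ∑ e, S.p e y * (S.a ^ (j + 1) * (2 * dist (S.w e y) (S.w e (xs i)) +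
          S.anchorOffset xs)) :=
        S.sum_p_mul_le_sum_p_mul hy hstep
    _ = S.a ^ (j + 1) * (2 * ∑ e, S.p e y * dist (S.w e y) (S.w e (xs i)) +
          S.anchorOffset xs) := by
        simp only [mul_add, Finset.sum_add_distrib, Finset.mul_sum, ← Finset.sum_mul,
          S.p_sum_one]
        congr 1
        · exact Finset.sum_congr rfl fun e _ => by ring
        · ring
    _ ≤ S.a ^ (j + 1) * (2 * S.a * S.anchorDist xs y + S.anchorOffset xs) := by
        have := S.contractive i y hy (xs i) (hxs i)
        rw [anchorDist_eq hy]
        exact mul_le_mul_of_nonneg_left (by linarith) (pow_nonneg S.a_pos.le _)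

theorem exists_sum_wordMass_mul_codeIncrement_le [BorelSpace K] [IsFiniteMeasure μ]
    (hinv : S.adjoint μ = μ) (hxs : ∀ i, xs i ∈ S.Ks i) :
    ∃ C ≠ ⊤, ∀ j, ∑ m ∈ words E (j + 2),
      S.wordMass μ m * ENNReal.ofReal (S.codeIncrement xs m) ≤ C * ENNReal.ofReal (S.a ^ j) := by
  set g : K → ℝ := fun y => S.a * (2 * S.a * S.anchorDist xs y + S.anchorOffset xs)
  have hg : Integrable g μ :=
    (((integrable_anchorDist hinv hxs).const_mul _).add (integrable_const _)).const_mul _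
  refine ⟨∫⁻ y, ENNReal.ofReal (g y) ∂μ, hg.lintegral_lt_top.ne, fun j => ?_⟩
  have hpoint (y : K) : ∑ m ∈ words E (j + 2),
      ENNReal.ofReal (S.cylWeight y m) * ENNReal.ofReal (S.codeIncrement xs m) ≤
        ENNReal.ofReal (S.a ^ j) * ENNReal.ofReal (g y) := by
    simp only [← ENNReal.ofReal_mul (S.cylWeight_nonneg y _)]
    rw [← ENNReal.ofReal_sum_of_nonneg fun m _ =>
        mul_nonneg (S.cylWeight_nonneg y m) (codeIncrement_nonneg m),
      ← ENNReal.ofReal_mul (pow_nonneg S.a_pos.le j)]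
    refine ENNReal.ofReal_le_ofReal ((sum_cylWeight_mul_codeIncrement_le hxs j y).trans_eq ?_)
    ring
  calc ∑ m ∈ words E (j + 2), S.wordMass μ m * ENNReal.ofReal (S.codeIncrement xs m)
      = ∫⁻ y, ∑ m ∈ words E (j + 2),
          ENNReal.ofReal (S.cylWeight y m) * ENNReal.ofReal (S.codeIncrement xs m) ∂μ := by
        rw [lintegral_finsetSum _ fun m _ => (S.measurable_cylWeight m).ennreal_ofReal.mul_const _]
        exact Finset.sum_congr rfl fun m _ =>
          (lintegral_mul_const _ (S.measurable_cylWeight m).ennreal_ofReal).symm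
    _ ≤ ∫⁻ y, ENNReal.ofReal (S.a ^ j) * ENNReal.ofReal (g y) ∂μ := lintegral_mono hpoint
    _ = (∫⁻ y, ENNReal.ofReal (g y) ∂μ) * ENNReal.ofReal (S.a ^ j) := by
        rw [lintegral_const_mul' _ _ ENNReal.ofReal_ne_top, mul_comm]

theorem sum_wordMass_filter_codeGap_gt_le (hinv : S.adjoint μ = μ) {C : ℝ≥0∞}
    (hC : ∀ j, ∑ m ∈ words E (j + 2),
      S.wordMass μ m * ENNReal.ofReal (S.codeIncrement xs m) ≤ C * ENNReal.ofReal (S.a ^ j))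
    (e₀ : E) {k : ℕ} {b : ℤ} {j : ℕ} (hb₁ : -(k : ℤ) ≤ b - j - 1) (hb₂ : b ≤ k) :
    ∑ W ∈ words E (2 * k + 1) with √S.a ^ j < S.codeGap xs (pathOfWord e₀ W (-k)) b j,
      S.wordMass μ W ≤ C * ENNReal.ofReal (√S.a ^ j) := by
  set d := (b - j - 1 - -(k : ℤ)).toNat
  set θ := ENNReal.ofReal (√S.a ^ j)
  have hθ : θ ≠ 0 := (ENNReal.ofReal_pos.2 (pow_pos (Real.sqrt_pos.2 S.a_pos) j)).ne'
  have hlen : 2 * k + 1 = d + (j + 2) + (2 * k + 1 - d - (j + 2)) := by omega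
  have hgap : ∀ W ∈ words E (2 * k + 1), S.codeGap xs (pathOfWord e₀ W (-k)) b j =
      S.codeIncrement xs ((W.drop d).take (j + 2)) := fun W hW => by
    rw [codeGap_eq, window_pathOfWord _ _ _ (by omega) (by rw [mem_words.1 hW]; omega)]
  refine (ENNReal.mul_le_mul_iff_right hθ ENNReal.ofReal_ne_top).1 ?_
  -- Markov's inequality for the expectation bound `hC`, with `a ^ j = θ ^ 2`.
  calc θ * ∑ W ∈ words E (2 * k + 1) with √S.a ^ j < S.codeGap xs (pathOfWord e₀ W (-k)) b j,
        S.wordMass μ W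
      ≤ ∑ W ∈ words E (2 * k + 1),
          S.wordMass μ W * ENNReal.ofReal (S.codeGap xs (pathOfWord e₀ W (-k)) b j) := by
        rw [Finset.mul_sum]
        refine (Finset.sum_le_sum fun W hW => ?_).trans
          (Finset.sum_le_sum_of_subset (Finset.filter_subset _ _))
        rw [mul_comm]
        exact mul_le_mul_right (ENNReal.ofReal_le_ofReal (Finset.mem_filter.1 hW).2.le) _
    _ = ∑ W ∈ words E (2 * k + 1),
          S.wordMass μ W * ENNReal.ofReal (S.codeIncrement xs ((W.drop d).take (j + 2))) :=
        Finset.sum_congr rfl fun W hW => by rw [hgap W hW]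
    _ ≤ C * ENNReal.ofReal (S.a ^ j) := by
        rw [hlen, sum_wordMass_mul_drop_take hinv (fun m => ENNReal.ofReal (S.codeIncrement xs m))]
        exact hC j
    _ = θ * (C * θ) := by
        rw [← Real.mul_self_sqrt S.a_pos.le, mul_pow,
          ENNReal.ofReal_mul (pow_nonneg (Real.sqrt_nonneg _) j)]
        ring

theorem exists_tendsto_codeSeq_of_codeGap_le [CompleteSpace K] {ζ : ℤ → E} {b : ℤ} {r : ℝ}
    (hr : r < 1) {J : ℕ} (h : ∀ j ≥ J, S.codeGap xs ζ b j ≤ r ^ j) :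
    ∃ L, Tendsto (S.codeSeq xs (shiftZ E b ζ)) atTop (𝓝 L) := by
  have hcauchy : CauchySeq fun j => S.codeSeq xs (shiftZ E b ζ) (j + J) :=
    cauchySeq_of_le_geometric r (r ^ J) hr fun j => by
      rw [← pow_add, add_comm J, add_right_comm]
      exact h _ (Nat.le_add_left J j)
  obtain ⟨L, hL⟩ := cauchySeq_tendsto_of_complete hcauchy
  exact ⟨L, (tendsto_add_atTop_iff_nat J).1 hL⟩

theorem shiftZ_mem_SigmaG {ζ : ℤ → E} (hζ : ζ ∈ S.SigmaG) (b : ℤ) :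
    shiftZ E b ζ ∈ S.SigmaG := fun j => by
  simpa only [shiftZ, add_right_comm j 1 b] using hζ (j + b)

theorem mem_Yset_of_tendsto {ζ : ℤ → E} (hζ : ζ ∈ S.SigmaG)
    (h : ∀ b, ∃ L, Tendsto (S.codeSeq xs (shiftZ E b ζ)) atTop (𝓝 L)) : ζ ∈ S.Yset xs :=
  Set.mem_iInter.2 fun n =>
    ⟨shiftZ E (-n) ζ, ⟨shiftZ_mem_SigmaG hζ (-n), h (-n)⟩,
      funext fun j => congrArg ζ (by simp)⟩

theorem cylWeight_window_ge {δ : ℝ} (hδ : 0 ≤ δ) (hp : ∀ e, ∀ x ∈ S.Ks (S.ι e), δ ≤ S.p e x)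
    {σ : ℤ → E} (hσ : σ ∈ S.SigmaG) (m : ℕ) {s : ℤ} {x : K} (hx : x ∈ S.Ks (S.ι (σ s))) :
    δ ^ m ≤ S.cylWeight x (window σ s m) := by
  induction m generalizing s x with
  | zero => simp [window]
  | succ m ih =>
    rw [window_succ, cylWeight_cons, pow_succ']
    have hw : S.w (σ s) x ∈ S.Ks (S.ι (σ (s + 1))) := hσ s ▸ S.w_maps (σ s) hx
    exact mul_le_mul (hp _ x hx) (ih hw) (pow_nonneg hδ m) (S.p_nonneg _ x)

theorem wordMass_window_pos {δ : ℝ} (hδ : 0 < δ) (hp : ∀ e, ∀ x ∈ S.Ks (S.ι e), δ ≤ S.p e x)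
    (hpos : ∀ e, 0 < μ (S.Ks (S.ι e))) {σ : ℤ → E} (hσ : σ ∈ S.SigmaG) (s : ℤ) (m : ℕ) :
    0 < S.wordMass μ (window σ s m) := by
  calc 0 < ENNReal.ofReal (δ ^ m) * μ (S.Ks (S.ι (σ s))) :=
        ENNReal.mul_pos (ENNReal.ofReal_pos.2 (pow_pos hδ m)).ne' (hpos (σ s)).ne'
    _ = ∫⁻ _ in S.Ks (S.ι (σ s)), ENNReal.ofReal (δ ^ m) ∂μ := (setLIntegral_const _ _).symm
    _ ≤ ∫⁻ x in S.Ks (S.ι (σ s)), ENNReal.ofReal (S.cylWeight x (window σ s m)) ∂μ :=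
        setLIntegral_mono (S.measurable_cylWeight _).ennreal_ofReal fun x hx =>
          ENNReal.ofReal_le_ofReal (cylWeight_window_ge hδ.le hp hσ m hx)
    _ ≤ S.wordMass μ (window σ s m) := setLIntegral_le_lintegral _ _

end Coding

section LevelSet

variable (S : CMS K N E) (xs : Fin N → K) (σ : ℤ → E) (n T : ℕ)

def levelSet (k : ℕ) : Set (ℤ → E) :=
  {ζ | window ζ (-n) (2 * n + 1) = window σ (-n) (2 * n + 1) ∧
    (∀ l : ℤ, -(k : ℤ) ≤ l → l < k → S.τ (ζ l) = S.ι (ζ (l + 1))) ∧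
    ∀ (b : ℤ) (i : ℕ), -(k : ℤ) ≤ b - (b.natAbs + T + i : ℕ) - 1 → b ≤ k →
      S.codeGap xs ζ b (b.natAbs + T + i) ≤ √S.a ^ (b.natAbs + T + i)}

variable {S xs σ n T} {μ : Measure K}

theorem levelSet_antitone : Antitone (S.levelSet xs σ n T) :=
  fun _ _ hkk' _ ⟨hwin, hadm, hgap⟩ =>
    ⟨hwin, fun l h₁ h₂ => hadm l (by omega) (by omega),
      fun b i h₁ h₂ => hgap b i (by omega) (by omega)⟩

theorem isClosed_levelSet [TopologicalSpace E] [DiscreteTopology E] (k : ℕ) :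
    IsClosed (S.levelSet xs σ n T k) := by
  refine isClosed_of_dependsOn_mem (s := Finset.Icc (-((n + k : ℕ) : ℤ)) (n + k))
    fun ζ ζ' h => ?_
  have hl {l : ℤ} (h₁ : -((n + k : ℕ) : ℤ) ≤ l) (h₂ : l ≤ n + k) : ζ l = ζ' l :=
    h l (by simp only [Finset.coe_Icc, Set.mem_Icc]; omega)
  have hw {s : ℤ} {m : ℕ} (h₁ : -((n + k : ℕ) : ℤ) ≤ s) (h₂ : s + m ≤ n + k + 1) :
      window ζ s m = window ζ' s m :=
    window_congr fun i hi₁ hi₂ => hl (by omega) (by omega)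
  simp only [levelSet, Set.mem_ofPred_eq, codeGap_eq]
  rw [hw (by omega) (by omega)]
  refine propext (and_congr Iff.rfl
    (and_congr (forall_congr' fun l => ?_) (forall_congr' fun b => ?_)))
  · exact imp_congr_right fun h₁ => imp_congr_right fun h₂ => by
      rw [hl (by omega) (by omega), hl (by omega) (by omega)]
  · exact forall_congr' fun i => imp_congr_right fun h₁ => imp_congr_right fun h₂ => by
      rw [hw (by omega) (by omega)]

theorem levelSet_nonempty (hinv : S.adjoint μ = μ) {C : ℝ≥0∞}
    (hC : ∀ j, ∑ m ∈ words E (j + 2),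
      S.wordMass μ m * ENNReal.ofReal (S.codeIncrement xs m) ≤ C * ENNReal.ofReal (S.a ^ j))
    (hT : ∀ F : Finset (ℤ × ℕ), ∑ bi ∈ F, C * ENNReal.ofReal (√S.a ^ (bi.1.natAbs + T + bi.2)) <
      S.wordMass μ (window σ (-n) (2 * n + 1)))
    {k : ℕ} (hnk : n ≤ k) : (S.levelSet xs σ n T k).Nonempty := by
  classical
  set ζ : List E → ℤ → E := fun W => pathOfWord (σ 0) W (-k)
  set F : Finset (ℤ × ℕ) := Finset.Icc (-(k : ℤ)) k ×ˢ Finset.range (2 * k + 1)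
  set j : ℤ × ℕ → ℕ := fun bi => bi.1.natAbs + T + bi.2
  set violates : ℤ × ℕ → List E → Prop := fun bi W =>
    -(k : ℤ) ≤ bi.1 - j bi - 1 ∧ bi.1 ≤ k ∧ √S.a ^ j bi < S.codeGap xs (ζ W) bi.1 (j bi)
  set good := (words E (2 * k + 1)).filter
    fun W => window (ζ W) (-n) (2 * n + 1) = window σ (-n) (2 * n + 1)
  have hbad : ∑ W ∈ good with ∃ bi ∈ F, violates bi W, S.wordMass μ W <
      ∑ W ∈ good, S.wordMass μ W := by
    rw [sum_wordMass_filter_window_eq hinv (σ 0) hnk (length_window σ _ _)]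
    refine lt_of_le_of_lt ((sum_filter_exists_le_sum_sum_filter good F violates _).trans
      (Finset.sum_le_sum fun bi _ => ?_)) (hT F)
    by_cases hin : -(k : ℤ) ≤ bi.1 - j bi - 1 ∧ bi.1 ≤ k
    · refine (Finset.sum_le_sum_of_subset fun W hW => ?_).trans
        (sum_wordMass_filter_codeGap_gt_le hinv hC (σ 0) hin.1 hin.2)
      simp only [good, violates, Finset.mem_filter] at hW ⊢
      exact ⟨hW.1.1, hW.2.2.2⟩
    · rw [Finset.filter_false_of_mem fun W _ h => hin ⟨h.1, h.2.1⟩, Finset.sum_empty]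
      exact zero_le
  obtain ⟨W, hW, hW0⟩ :
      ∃ W ∈ good.filter fun W => ¬ ∃ bi ∈ F, violates bi W, S.wordMass μ W ≠ 0 := by
    refine Finset.exists_ne_zero_of_sum_ne_zero fun h0 => hbad.ne ?_
    rw [← Finset.sum_filter_add_sum_filter_not good (fun W => ∃ bi ∈ F, violates bi W), h0,
      add_zero]
  simp only [good, Finset.mem_filter, mem_words] at hW
  obtain ⟨⟨hWlen, hwin⟩, hsafe⟩ := hW
  refine ⟨ζ W, hwin, fun l h₁ h₂ => rel_pathOfWord_of_isChain _
    (isChain_of_wordMass_ne_zero hW0) (by omega) (by omega),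
    fun b i h₁ h₂ => not_lt.1 fun hlt => hsafe ⟨(b, i), ?_, h₁, h₂, hlt⟩⟩
  simp only [F, Finset.mem_product, Finset.mem_Icc, Finset.mem_range]
  omega

theorem exists_forall_mem_levelSet [TopologicalSpace E] [DiscreteTopology E]
    (hinv : S.adjoint μ = μ) {C : ℝ≥0∞}
    (hC : ∀ j, ∑ m ∈ words E (j + 2),
      S.wordMass μ m * ENNReal.ofReal (S.codeIncrement xs m) ≤ C * ENNReal.ofReal (S.a ^ j))
    (hT : ∀ F : Finset (ℤ × ℕ), ∑ bi ∈ F, C * ENNReal.ofReal (√S.a ^ (bi.1.natAbs + T + bi.2)) <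
      S.wordMass μ (window σ (-n) (2 * n + 1))) :
    ∃ ζ, ∀ k, ζ ∈ S.levelSet xs σ n T k := by
  obtain ⟨ζ, hζ⟩ := IsCompact.nonempty_iInter_of_sequence_nonempty_isCompact_isClosed
    (fun L => S.levelSet xs σ n T (n + L)) (fun L => levelSet_antitone (by omega))
    (fun L => levelSet_nonempty hinv hC hT (by omega)) (isClosed_levelSet _).isCompact
    (fun L => isClosed_levelSet _)
  exact ⟨ζ, fun k => levelSet_antitone (by omega) (Set.mem_iInter.1 hζ k)⟩

theorem mem_Yset_of_forall_mem_levelSet [CompleteSpace K] {ζ : ℤ → E}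
    (h : ∀ k, ζ ∈ S.levelSet xs σ n T k) : ζ ∈ S.Yset xs := by
  refine mem_Yset_of_tendsto (fun l => (h (l.natAbs + 1)).2.1 l (by omega) (by omega))
    fun b => exists_tendsto_codeSeq_of_codeGap_le S.sqrt_a_lt_one (J := b.natAbs + T)
      fun j hj => ?_
  obtain ⟨i, rfl⟩ := Nat.exists_eq_add_of_le hj
  exact (h (b.natAbs + (b.natAbs + T + i) + 1)).2.2 b i (by omega) (by omega)

end LevelSet

end CMS

theorem cms_Y_dense_in_SigmaG_general
    {K : Type*} [MetricSpace K] [MeasurableSpace K] [BorelSpace K]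
    {N : ℕ} {E : Type*} [Fintype E] [TopologicalSpace E] [DiscreteTopology E]
    (S : CMS K N E)
    (hProper : ∀ A : Set K, Bornology.IsBounded A → IsCompact (closure A))
    (δ : ℝ) (hδ : 0 < δ) (hp : ∀ e, ∀ x ∈ S.Ks (S.ι e), δ ≤ S.p e x)
    (μ : Measure K) (hμ : IsProbabilityMeasure μ) (hinv : S.adjoint μ = μ)
    (hpos : ∀ e, 0 < μ (S.Ks (S.ι e)))
    (xs : Fin N → K) (hxs : ∀ i, xs i ∈ S.Ks i) :
    S.SigmaG ⊆ closure (S.Yset xs) := by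
  have : ProperSpace K := ⟨fun x r => by
    simpa [Metric.isClosed_closedBall.closure_eq] using hProper _ Metric.isBounded_closedBall⟩
  obtain ⟨C, hC_top, hC⟩ := CMS.exists_sum_wordMass_mul_codeIncrement_le hinv hxs
  intro σ hσ
  refine mem_closure_of_forall_exists_eqOn fun n => ?_
  obtain ⟨T, hT⟩ := exists_sum_mul_pow_lt hC_top
    (S.wordMass_window_pos hδ hp hpos hσ (-n) (2 * n + 1)) (Real.sqrt_nonneg _) S.sqrt_a_lt_one
  obtain ⟨ζ, hζ⟩ := CMS.exists_forall_mem_levelSet hinv hC hT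
  exact ⟨ζ, CMS.mem_Yset_of_forall_mem_levelSet hζ,
    fun l hl => eq_of_window_eq (hζ 0).1 (by omega) (by omega)⟩

theorem cms_Y_dense_in_SigmaG
    {K : Type*} [MetricSpace K] [MeasurableSpace K] [BorelSpace K]
    {N : ℕ} {E : Type*} [Fintype E] [TopologicalSpace E] [DiscreteTopology E]
    (S : CMS K N E)
    (hProper : ∀ A : Set K, Bornology.IsBounded A → IsCompact (closure A))
    (hOpen : ∀ i, IsOpen (S.Ks i))
    (hDini : ∀ e, DiniOn (S.p e) (S.Ks (S.ι e)))
    (δ : ℝ) (hδ : 0 < δ) (hp : ∀ e, ∀ x ∈ S.Ks (S.ι e), δ ≤ S.p e x)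
    (μ : Measure K) (hμ : IsProbabilityMeasure μ) (hinv : S.adjoint μ = μ)
    (hpos : ∀ e, 0 < μ (S.Ks (S.ι e)))
    (xs : Fin N → K) (hxs : ∀ i, xs i ∈ S.Ks i) :
    S.SigmaG ⊆ closure (S.Yset xs) :=
  cms_Y_dense_in_SigmaG_general S hProper δ hδ hp μ hμ hinv hpos xs hxs
end
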